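/- Let R ∈ ℝ^{2×2} be the rotation matrix with rows (0, 1) and (−1, 0), and let ‖·‖ denote the Euclidean norm on ℝ². Then for every x₀ ∈ ℝ² ∖ {0} there exists no differentiable function z : [0,∞) → ℝ² with z(0) = x₀ and z(t) ≠ 0 for all t ∈ [0,∞) which satisfies, for all t ∈ [0,∞), z'(t) = ‖ z(t) − t·R z(t)/‖z(t)‖^{3/2} ‖² · R( z(t) − t·R z(t)/‖z(t)‖^{3/2} ). In other words, the maximal existence time of this ordinary differential equation is finite for every nonzero initial value. -/

import Mathlib

/-!
Write `s = t / ‖z‖^(3/2)`. Since `⟨z, Rz⟩ = 0` and `R² = -1`, along a solution `u = ‖z‖²`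
satisfies `u' = 2 s (1 + s²) u² ≥ 2 t u^(5/4)`. Hence `u^(-1/4) + t²/4` is nonincreasing on
`[0, ∞)`, which is impossible for a positive `u` since `t²/4` is unbounded.
-/

/-- The rotation `R = ((0,1),(-1,0))` of the plane, acting on `ℝ²` with the
Euclidean norm. -/
noncomputable def planeRot (v : EuclideanSpace ℝ (Fin 2)) : EuclideanSpace ℝ (Fin 2) :=
  WithLp.toLp 2 (fun i : Fin 2 => if i = 0 then v 1 else -(v 0))

open Set Filter

theorem antitoneOn_rpow_neg_add_sq {u u' : ℝ → ℝ} {p c : ℝ} (hp : 0 ≤ p)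
    (hu : ∀ t ∈ Ici 0, 0 < u t) (hu' : ∀ t ∈ Ici 0, HasDerivWithinAt u (u' t) (Ici 0) t)
    (hgrowth : ∀ t ∈ Ici 0, c * t * u t ^ (1 + p) ≤ u' t) :
    AntitoneOn (fun t => u t ^ (-p) + p * c * t ^ 2 / 2) (Ici 0) := by
  have hderiv : ∀ t ∈ Ici (0 : ℝ), HasDerivWithinAt (fun t => u t ^ (-p) + p * c * t ^ 2 / 2)
      (u' t * -p * u t ^ (-p - 1) + p * c * t) (Ici 0) t := fun t ht => by
    have hquad : HasDerivWithinAt (fun t => p * c * t ^ 2 / 2) (p * c * t) (Ici 0) t :=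
      (((hasDerivAt_pow 2 t).const_mul (p * c)).div_const 2).hasDerivWithinAt.congr_deriv
        (by norm_num; ring)
    exact ((hu' t ht).rpow_const (p := -p) (Or.inl (hu t ht).ne')).add hquad
  refine antitoneOn_of_hasDerivWithinAt_nonpos
    (f' := fun t => u' t * -p * u t ^ (-p - 1) + p * c * t) (convex_Ici 0)
    (fun t ht => (hderiv t ht).continuousWithinAt) (fun t ht => ?_) (fun t ht => ?_)
  · rw [interior_Ici] at ht ⊢
    exact (hderiv t (Ioi_subset_Ici_self ht)).mono Ioi_subset_Ici_self
  · rw [interior_Ici] at ht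
    have ht' : t ∈ Ici 0 := Ioi_subset_Ici_self ht
    have hcancel : u t ^ (-p - 1) * u t ^ (1 + p) = 1 := by
      rw [← Real.rpow_add (hu t ht'), show -p - 1 + (1 + p) = 0 by ring, Real.rpow_zero]
    calc u' t * -p * u t ^ (-p - 1) + p * c * t
        = p * c * t * (1 - u t ^ (-p - 1) * u t ^ (1 + p))
          + p * u t ^ (-p - 1) * (c * t * u t ^ (1 + p) - u' t) := by ring
      _ ≤ 0 := by
        rw [hcancel, sub_self, mul_zero, zero_add]
        exact mul_nonpos_of_nonneg_of_nonpos (mul_nonneg hp (Real.rpow_nonneg (hu t ht').le _))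
          (sub_nonpos.2 (hgrowth t ht'))

theorem false_of_hasDerivWithinAt_ge_mul_rpow {u u' : ℝ → ℝ} {p c : ℝ} (hp : 0 < p) (hc : 0 < c)
    (hu : ∀ t ∈ Ici 0, 0 < u t) (hu' : ∀ t ∈ Ici 0, HasDerivWithinAt u (u' t) (Ici 0) t)
    (hgrowth : ∀ t ∈ Ici 0, c * t * u t ^ (1 + p) ≤ u' t) : False := by
  set g := fun t => u t ^ (-p) + p * c * t ^ 2 / 2
  have hanti := antitoneOn_rpow_neg_add_sq hp.le hu hu' hgrowth
  have hlarge : Tendsto (fun t : ℝ => p * c * t ^ 2 / 2) atTop atTop :=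
    ((tendsto_pow_atTop two_ne_zero).const_mul_atTop (by positivity)).atTop_div_const two_pos
  obtain ⟨T, hT, hgT⟩ := ((eventually_ge_atTop 0).and (hlarge.eventually_gt_atTop (g 0))).exists
  have hgT_le : g T ≤ g 0 := hanti self_mem_Ici hT hT
  have hpos : 0 < u T ^ (-p) := Real.rpow_pos_of_pos (hu T hT) _
  simp only [g] at hgT_le hgT
  linarith

noncomputable def rotationField (t : ℝ) (a : EuclideanSpace ℝ (Fin 2)) :
    EuclideanSpace ℝ (Fin 2) :=
  (‖a - (t / ‖a‖ ^ ((3 : ℝ) / 2)) • planeRot a‖ ^ 2) •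
    planeRot (a - (t / ‖a‖ ^ ((3 : ℝ) / 2)) • planeRot a)

theorem inner_planeRot_sub_smul_planeRot (a : EuclideanSpace ℝ (Fin 2)) (c : ℝ) :
    inner ℝ a (planeRot (a - c • planeRot a)) = c * ‖a‖ ^ 2 := by
  simp only [planeRot, Fin.isValue, PiLp.sub_apply, PiLp.smul_apply, one_ne_zero, ↓reduceIte,
    smul_eq_mul, mul_neg, sub_neg_eq_add, neg_sub, PiLp.inner_apply, RCLike.inner_apply,
    Real.ringHom_apply, ite_mul, Fin.sum_univ_two, EuclideanSpace.norm_sq_eq, Real.norm_eq_abs,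
    sq_abs]
  ring

theorem norm_sub_smul_planeRot_sq (a : EuclideanSpace ℝ (Fin 2)) (c : ℝ) :
    ‖a - c • planeRot a‖ ^ 2 = (1 + c ^ 2) * ‖a‖ ^ 2 := by
  simp only [planeRot, Fin.isValue, EuclideanSpace.norm_sq_eq, PiLp.sub_apply, PiLp.smul_apply,
    smul_eq_mul, mul_ite, mul_neg, Real.norm_eq_abs, sq_abs, Fin.sum_univ_two, ↓reduceIte,
    one_ne_zero, sub_neg_eq_add]
  ring

theorem mul_rpow_le_inner_rotationField {a : EuclideanSpace ℝ (Fin 2)} (ha : a ≠ 0) {t : ℝ}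
    (ht : 0 ≤ t) : t * (‖a‖ ^ 2) ^ (1 + 1 / 4 : ℝ) ≤ inner ℝ a (rotationField t a) := by
  set s := t / ‖a‖ ^ ((3 : ℝ) / 2)
  -- every power of `‖a‖` that occurs is an integer power of `q = √‖a‖`
  set q := ‖a‖ ^ (1 / 2 : ℝ)
  have hq : 0 < q := Real.rpow_pos_of_pos (norm_pos_iff.2 ha) _
  have hq_pow (n : ℕ) : ‖a‖ ^ ((n : ℝ) / 2) = q ^ n := by
    rw [← Real.rpow_natCast, ← Real.rpow_mul (norm_nonneg a)]; ring_nf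
  have hnorm : ‖a‖ = q ^ 2 := by simpa using hq_pow 2
  have hs : s * q ^ 3 = t := by
    rw [show q ^ 3 = ‖a‖ ^ ((3 : ℝ) / 2) by exact_mod_cast (hq_pow 3).symm]
    exact div_mul_cancel₀ _ (by positivity)
  have hinner : inner ℝ a (rotationField t a) = (1 + s ^ 2) * ‖a‖ ^ 2 * (s * ‖a‖ ^ 2) := by
    rw [rotationField, real_inner_smul_right, inner_planeRot_sub_smul_planeRot,
      norm_sub_smul_planeRot_sq]
  have hlhs : (‖a‖ ^ 2) ^ (1 + 1 / 4 : ℝ) = q ^ 5 := by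
    rw [← Real.rpow_natCast, ← Real.rpow_mul (norm_nonneg a), ← hq_pow 5]; norm_num
  rw [hinner, hlhs, hnorm, show s * (q ^ 2) ^ 2 = s * q ^ 3 * q by ring, hs]
  nlinarith [mul_nonneg (mul_nonneg ht (pow_pos hq 5).le) (sq_nonneg s)]

theorem no_global_solution_rotation_ode_general
    (x₀ : EuclideanSpace ℝ (Fin 2)) :
    ¬ ∃ z : ℝ → EuclideanSpace ℝ (Fin 2),
        z 0 = x₀ ∧ (∀ t ∈ Set.Ici (0 : ℝ), z t ≠ 0) ∧
        ∀ t ∈ Set.Ici (0 : ℝ),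
          HasDerivWithinAt z
            ((‖z t - (t / ‖z t‖ ^ ((3 : ℝ) / 2)) • planeRot (z t)‖ ^ 2) •
              planeRot (z t - (t / ‖z t‖ ^ ((3 : ℝ) / 2)) • planeRot (z t)))
            (Set.Ici 0) t := by
  rintro ⟨z, -, hne, hz⟩
  refine false_of_hasDerivWithinAt_ge_mul_rpow (u := fun t => ‖z t‖ ^ 2) (p := 1 / 4) (c := 2)
    (by norm_num) two_pos (fun t ht => pow_pos (norm_pos_iff.2 (hne t ht)) 2)
    (fun t ht => (hz t ht).norm_sq) fun t ht => ?_
  rw [mul_assoc]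
  exact mul_le_mul_of_nonneg_left (mul_rpow_le_inner_rotationField (hne t ht) ht) zero_le_two

/-- For every nonzero initial value `x₀ ∈ ℝ²` there is no globally defined
(nonvanishing) differentiable solution `z : [0,∞) → ℝ²` of the ODE
`z'(t) = ‖z(t) - t R z(t)/‖z(t)‖^(3/2)‖² · R (z(t) - t R z(t)/‖z(t)‖^(3/2))`
with `z(0) = x₀`; that is, the maximal existence time is finite. -/
theorem no_global_solution_rotation_ode
    (x₀ : EuclideanSpace ℝ (Fin 2)) (hx₀ : x₀ ≠ 0) :
    ¬ ∃ z : ℝ → EuclideanSpace ℝ (Fin 2),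
        z 0 = x₀ ∧ (∀ t ∈ Set.Ici (0 : ℝ), z t ≠ 0) ∧
        ∀ t ∈ Set.Ici (0 : ℝ),
          HasDerivWithinAt z
            ((‖z t - (t / ‖z t‖ ^ ((3 : ℝ) / 2)) • planeRot (z t)‖ ^ 2) •
              planeRot (z t - (t / ‖z t‖ ^ ((3 : ℝ) / 2)) • planeRot (z t)))
            (Set.Ici 0) t :=
  no_global_solution_rotation_ode_general x₀
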